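/- For every p ∈ ℝ⁴ with p² ≠ 0, the tensors 𝒢 and 𝓛 are related via the metric 𝔾 and the Minkowski metric η: 𝔾_{μνρσ} η^{κλ} 𝓛^{ρσ}_λ = 𝒢^κ_{μν} and 𝔾^{μνρσ} η_{κλ} 𝒢^κ_{μν} = 𝓛^{ρσ}_λ, summing over the repeated indices (the first identity uses that the spacetime dimension is 4). -/
import Mathlib


noncomputable section

/-- Minkowski metric components `η_{μν} = η^{μν} = diag(1, -1, -1, -1)`. -/
def η : Fin 4 → Fin 4 → ℝ := fun μ ν => if μ = ν then (if μ = 0 then 1 else -1) else 0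

/-- Kronecker delta. -/
def δ : Fin 4 → Fin 4 → ℝ := fun μ ν => if μ = ν then 1 else 0

/-- Lowered index: `lo p μ = p_μ = η_{μν} p^ν`. -/
def lo (p : Fin 4 → ℝ) (μ : Fin 4) : ℝ := ∑ ν, η μ ν * p ν

/-- Minkowski inner product `p·q = η_{μν} p^μ q^ν`. -/
def mdot (p q : Fin 4 → ℝ) : ℝ := ∑ μ, ∑ ν, η μ ν * p μ * q ν

/-- Graviton longitudinal projector `𝕃^{ρσ}_{μν}`. -/
def LL (p : Fin 4 → ℝ) (ρ σ μ ν : Fin 4) : ℝ :=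
  (1 / (2 * mdot p p)) *
    (δ ρ μ * p σ * lo p ν + δ σ μ * p ρ * lo p ν + δ ρ ν * p σ * lo p μ + δ σ ν * p ρ * lo p μ
      - 2 * η ρ σ * lo p μ * lo p ν)

/-- Graviton identity tensor `𝕀^{ρσ}_{μν}`. -/
def II (ρ σ μ ν : Fin 4) : ℝ := (1 / 2) * (δ ρ μ * δ σ ν + δ σ μ * δ ρ ν)

/-- Graviton transversal projector `𝕋^{ρσ}_{μν}`. -/
def TT (p : Fin 4 → ℝ) (ρ σ μ ν : Fin 4) : ℝ := II ρ σ μ ν - LL p ρ σ μ ν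

/-- The metric `𝔾_{μνρσ}`. -/
def Gmet (p : Fin 4 → ℝ) (μ ν ρ σ : Fin 4) : ℝ :=
  (1 / mdot p p) * (η μ ρ * η ν σ + η μ σ * η ν ρ - η μ ν * η ρ σ)

/-- The inverse metric `𝔾^{μνρσ}`. -/
def GmetInv (p : Fin 4 → ℝ) (μ ν ρ σ : Fin 4) : ℝ :=
  (mdot p p / 4) * (η μ ρ * η ν σ + η μ σ * η ν ρ - η μ ν * η ρ σ)

/-- Gauge-transformation tensor `𝒢^κ_{μν}`. -/
def Gt (p : Fin 4 → ℝ) (κ μ ν : Fin 4) : ℝ :=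
  (1 / mdot p p) * (lo p μ * δ κ ν + lo p ν * δ κ μ)

/-- Gauge-fixing projection tensor `𝓛^{ρσ}_λ`. -/
def Lt (p : Fin 4 → ℝ) (ρ σ lam : Fin 4) : ℝ :=
  (1 / 2) * (p ρ * δ σ lam + p σ * δ ρ lam - lo p lam * η ρ σ)

theorem aux_eta00 : η 0 0 = (1:ℝ) := rfl
theorem aux_d00 : δ 0 0 = (1:ℝ) := rfl
theorem aux_eta01 : η 0 1 = (0:ℝ) := rfl
theorem aux_d01 : δ 0 1 = (0:ℝ) := rfl
theorem aux_eta02 : η 0 2 = (0:ℝ) := rfl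
theorem aux_d02 : δ 0 2 = (0:ℝ) := rfl
theorem aux_eta03 : η 0 3 = (0:ℝ) := rfl
theorem aux_d03 : δ 0 3 = (0:ℝ) := rfl
theorem aux_eta10 : η 1 0 = (0:ℝ) := rfl
theorem aux_d10 : δ 1 0 = (0:ℝ) := rfl
theorem aux_eta11 : η 1 1 = (-1:ℝ) := rfl
theorem aux_d11 : δ 1 1 = (1:ℝ) := rfl
theorem aux_eta12 : η 1 2 = (0:ℝ) := rfl
theorem aux_d12 : δ 1 2 = (0:ℝ) := rfl
theorem aux_eta13 : η 1 3 = (0:ℝ) := rfl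
theorem aux_d13 : δ 1 3 = (0:ℝ) := rfl
theorem aux_eta20 : η 2 0 = (0:ℝ) := rfl
theorem aux_d20 : δ 2 0 = (0:ℝ) := rfl
theorem aux_eta21 : η 2 1 = (0:ℝ) := rfl
theorem aux_d21 : δ 2 1 = (0:ℝ) := rfl
theorem aux_eta22 : η 2 2 = (-1:ℝ) := rfl
theorem aux_d22 : δ 2 2 = (1:ℝ) := rfl
theorem aux_eta23 : η 2 3 = (0:ℝ) := rfl
theorem aux_d23 : δ 2 3 = (0:ℝ) := rfl
theorem aux_eta30 : η 3 0 = (0:ℝ) := rfl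
theorem aux_d30 : δ 3 0 = (0:ℝ) := rfl
theorem aux_eta31 : η 3 1 = (0:ℝ) := rfl
theorem aux_d31 : δ 3 1 = (0:ℝ) := rfl
theorem aux_eta32 : η 3 2 = (0:ℝ) := rfl
theorem aux_d32 : δ 3 2 = (0:ℝ) := rfl
theorem aux_eta33 : η 3 3 = (-1:ℝ) := rfl
theorem aux_d33 : δ 3 3 = (1:ℝ) := rfl

theorem mk0 (h : 0 < 4) : (⟨0, h⟩ : Fin 4) = (0 : Fin 4) := rfl
theorem mk1 (h : 1 < 4) : (⟨1, h⟩ : Fin 4) = (1 : Fin 4) := rfl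
theorem mk2 (h : 2 < 4) : (⟨2, h⟩ : Fin 4) = (2 : Fin 4) := rfl
theorem mk3 (h : 3 < 4) : (⟨3, h⟩ : Fin 4) = (3 : Fin 4) := rfl

set_option maxHeartbeats 40000000 in
/-- The tensors `𝒢` and `𝓛` are related via the metric `𝔾` and the Minkowski metric `η`:
`𝔾_{μνρσ} η^{κλ} 𝓛^{ρσ}_λ = 𝒢^κ_{μν}` and `𝔾^{μνρσ} η_{κλ} 𝒢^κ_{μν} = 𝓛^{ρσ}_λ`. -/
theorem gauge_tensors_related_via_metric (p : Fin 4 → ℝ) (hp : mdot p p ≠ 0) :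
    (∀ μ ν κ : Fin 4,
      ∑ ρ, ∑ σ, ∑ lam, Gmet p μ ν ρ σ * η κ lam * Lt p ρ σ lam = Gt p κ μ ν) ∧
    (∀ ρ σ lam : Fin 4,
      ∑ μ, ∑ ν, ∑ κ, GmetInv p μ ν ρ σ * η κ lam * Gt p κ μ ν = Lt p ρ σ lam) := by
  have h0 : lo p 0 = p 0 := by simp [lo, η, Fin.sum_univ_four]
  have h1 : lo p 1 = -p 1 := by simp [lo, η, Fin.sum_univ_four]
  have h2 : lo p 2 = -p 2 := by simp [lo, η, Fin.sum_univ_four]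
  have h3 : lo p 3 = -p 3 := by simp [lo, η, Fin.sum_univ_four]
  constructor <;> intro a b c <;> fin_cases a <;> fin_cases b <;> fin_cases c <;>
    simp only [mk0, mk1, mk2, mk3, Gmet, GmetInv, Gt, Lt, Fin.sum_univ_four, Fin.isValue, h0, h1, h2, h3,
      aux_eta00, aux_eta01, aux_eta02, aux_eta03, aux_eta10, aux_eta11, aux_eta12, aux_eta13, aux_eta20, aux_eta21, aux_eta22, aux_eta23, aux_eta30, aux_eta31, aux_eta32, aux_eta33, aux_d00, aux_d01, aux_d02, aux_d03, aux_d10, aux_d11, aux_d12, aux_d13, aux_d20, aux_d21, aux_d22, aux_d23, aux_d30, aux_d31, aux_d32, aux_d33] <;>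
    first
    | ring1
    | (field_simp <;> first | ring1 | simp [mul_inv_cancel₀ hp])
    | simp [mul_inv_cancel₀ hp]
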